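/- arXiv:1806.09843 — 4 statements merged into one kernel-verified Lean document; each statement's English description precedes it below -/
import Mathlib

section
/- For every real c > 0 and every real d ≥ 0, the integral ∫₀^∞ exp(-c²·x)·I₀(d·√(2x)) dx converges and equals (1/c²)·exp(d²/(2c²)). -/
open MeasureTheory Real Set

/-- Modified Bessel function of the first kind, order zero:
`I₀(x) = ∑ (x²/4)ⁿ / (n!)²`. -/
noncomputable def besselI0 (x : ℝ) : ℝ :=
  ∑' n : ℕ, (x ^ 2 / 4) ^ n / ((Nat.factorial n : ℝ)) ^ 2

/-- First-order Marcum Q-function: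
`Q(a,b) = ∫_b^∞ x · exp(-(x²+a²)/2) · I₀(a·x) dx`. -/
noncomputable def marcumQ (a b : ℝ) : ℝ :=
  ∫ x in Set.Ioi b, x * Real.exp (-(x ^ 2 + a ^ 2) / 2) * besselI0 (a * x)

/-- Normalized Rician fading density with Rician factor `K`. -/
noncomputable def ricianPDF (K h : ℝ) : ℝ :=
  (1 / 2) * Real.exp (-K - h / 2) * besselI0 (Real.sqrt (2 * K * h))

/-!
Expanding `I₀(d √(2x)) = ∑ (d²/2)ⁿ xⁿ / (n!)²` and integrating term by term against `e^{-c² x}`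
with `∫₀^∞ xⁿ e^{-r x} dx = n! / rⁿ⁺¹` (legitimate because the integrals of the absolute values
are summable) gives `∑ (d²/(2c²))ⁿ / (c² n!)`, which is the exponential series. Integrability
comes for free: the integral is nonzero, whereas Bochner integrals of non-integrable functions
vanish.
-/

open Nat

lemma hasSum_pow_div_factorial (x : ℝ) : HasSum (fun n => x ^ n / n !) (exp x) := by
  rw [exp_eq_exp_ℝ]
  exact NormedSpace.expSeries_div_hasSum_exp x

lemma besselI0_mul_sqrt (d : ℝ) {x : ℝ} (hx : 0 ≤ x) :
    besselI0 (d * √(2 * x)) = ∑' n : ℕ, (d ^ 2 / 2) ^ n / (n ! : ℝ) ^ 2 * x ^ n := by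
  refine tsum_congr fun n => ?_
  rw [mul_pow, sq_sqrt (by positivity), div_mul_eq_mul_div, ← mul_pow]
  ring_nf

lemma integral_pow_mul_exp_neg_mul_Ioi {r : ℝ} (hr : 0 < r) (n : ℕ) :
    ∫ x in Ioi (0 : ℝ), x ^ n * exp (-r * x) = n ! / r ^ (n + 1) := by
  have h := integral_rpow_mul_exp_neg_mul_Ioi (a := n + 1) (by positivity) hr
  rw [add_sub_cancel_right, Gamma_nat_eq_factorial, ← Nat.cast_succ, rpow_natCast,
    one_div, inv_pow, inv_mul_eq_div] at h
  rw [← h]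
  refine setIntegral_congr_fun measurableSet_Ioi fun x _ => ?_
  rw [rpow_natCast, neg_mul]

lemma integrableOn_pow_mul_exp_neg_mul_Ioi {r : ℝ} (hr : 0 < r) (n : ℕ) :
    IntegrableOn (fun x : ℝ => x ^ n * exp (-r * x)) (Ioi 0) :=
  Integrable.of_integral_ne_zero (by rw [integral_pow_mul_exp_neg_mul_Ioi hr]; positivity)

theorem hasSum_integral_exp_neg_mul_mul_tsum {r : ℝ} (hr : 0 < r) {a : ℕ → ℝ}
    (ha : Summable fun n => |a n| * n ! / r ^ (n + 1)) :
    HasSum (fun n => a n * n ! / r ^ (n + 1))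
      (∫ x in Ioi (0 : ℝ), exp (-r * x) * ∑' n, a n * x ^ n) := by
  have hint n := (integrableOn_pow_mul_exp_neg_mul_Ioi hr n).const_mul (a n)
  have hnorm n :
      ∫ x in Ioi (0 : ℝ), ‖a n * (x ^ n * exp (-r * x))‖ = |a n| * n ! / r ^ (n + 1) := by
    rw [setIntegral_congr_fun measurableSet_Ioi fun x (hx : 0 < x) => by
        rw [norm_mul, norm_mul, norm_pow, norm_of_nonneg hx.le, norm_of_nonneg (exp_pos _).le,
          Real.norm_eq_abs],
      integral_const_mul, integral_pow_mul_exp_neg_mul_Ioi hr, mul_div_assoc]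
  have hterm n :
      ∫ x in Ioi (0 : ℝ), a n * (x ^ n * exp (-r * x)) = a n * n ! / r ^ (n + 1) := by
    rw [integral_const_mul, integral_pow_mul_exp_neg_mul_Ioi hr, mul_div_assoc]
  have hsum := hasSum_integral_of_summable_integral_norm hint (by simpa only [hnorm] using ha)
  simp only [hterm] at hsum
  have hpt x : exp (-r * x) * ∑' n, a n * x ^ n = ∑' n, a n * (x ^ n * exp (-r * x)) := by
    rw [← tsum_mul_left]
    exact tsum_congr fun n => by ring
  simpa only [hpt] using hsum

theorem stmt_0_general (c d : ℝ) (hc : 0 < c) :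
    IntegrableOn (fun x : ℝ => Real.exp (-(c ^ 2) * x) * besselI0 (d * Real.sqrt (2 * x)))
      (Set.Ioi 0) ∧
    ∫ x in Set.Ioi (0 : ℝ), Real.exp (-(c ^ 2) * x) * besselI0 (d * Real.sqrt (2 * x)) =
      (1 / c ^ 2) * Real.exp (d ^ 2 / (2 * c ^ 2)) := by
  set a : ℕ → ℝ := fun n => (d ^ 2 / 2) ^ n / (n ! : ℝ) ^ 2
  have hcoeff n :
      a n * n ! / (c ^ 2) ^ (n + 1) = 1 / c ^ 2 * ((d ^ 2 / (2 * c ^ 2)) ^ n / n !) := by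
    simp only [a]
    rw [pow_succ, div_pow, div_pow, mul_pow]
    field_simp
    ring
  have hexp : HasSum (fun n => a n * n ! / (c ^ 2) ^ (n + 1))
      (1 / c ^ 2 * exp (d ^ 2 / (2 * c ^ 2))) := by
    simpa only [hcoeff] using (hasSum_pow_div_factorial _).mul_left (1 / c ^ 2)
  have ha_nonneg n : 0 ≤ a n := by positivity
  have hlaplace := hasSum_integral_exp_neg_mul_mul_tsum (pow_pos hc 2)
    (hexp.summable.congr fun n => by rw [abs_of_nonneg (ha_nonneg n)])
  have hI : ∫ x in Ioi (0 : ℝ), exp (-(c ^ 2) * x) * besselI0 (d * √(2 * x)) =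
      1 / c ^ 2 * exp (d ^ 2 / (2 * c ^ 2)) := by
    rw [setIntegral_congr_fun measurableSet_Ioi fun x (hx : 0 < x) => by
      rw [besselI0_mul_sqrt d hx.le]]
    exact hlaplace.unique hexp
  exact ⟨Integrable.of_integral_ne_zero (by rw [hI]; positivity), hI⟩

theorem stmt_0 (c d : ℝ) (hc : 0 < c) (hd : 0 ≤ d) :
    IntegrableOn (fun x : ℝ => Real.exp (-(c ^ 2) * x) * besselI0 (d * Real.sqrt (2 * x)))
      (Set.Ioi 0) ∧
    ∫ x in Set.Ioi (0 : ℝ), Real.exp (-(c ^ 2) * x) * besselI0 (d * Real.sqrt (2 * x)) =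
      (1 / c ^ 2) * Real.exp (d ^ 2 / (2 * c ^ 2)) :=
  stmt_0_general c d hc
end

section
/- For every real c > 0 and all reals e ≥ 0 and f ≥ 0, the integral ∫₀^∞ exp(-c²·x)·Q(e, f·√(2x)) dx converges and equals (1/c²)·{1 - (f²/(c²+f²))·exp(-c²·e²/(2(c²+f²)))}. -/
open MeasureTheory Real Set

/-!
Write `Q(e, b) = ∫_b^∞ p(y) dy` with `p(y) = y e^{-(y²+e²)/2} I₀(ey)`. By Tonelli, the Laplace
transform becomes `∫_0^∞ p(y) ∫_0^{y²/(2f²)} e^{-c²x} dx dy`, that is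
`c⁻² ∫_0^∞ p(y) (1 - e^{-c²y²/(2f²)}) dy`, and both remaining integrals are instances of
`∫_0^∞ y e^{-by²} I₀(ay) dy = e^{a²/(4b)}/(2b)`, obtained by
integrating the series of `I₀` term by term against Gaussian moments.
-/

open scoped ENNReal

lemma summable_besselI0_series (x : ℝ) :
    Summable fun n : ℕ => (x ^ 2 / 4) ^ n / (n.factorial : ℝ) ^ 2 := by
  refine (Real.summable_pow_div_factorial (x ^ 2 / 4)).of_nonneg_of_le (fun n => by positivity)
    fun n => div_le_div_of_nonneg_left (by positivity) (by positivity) ?_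
  exact le_self_pow₀ (mod_cast Nat.one_le_iff_ne_zero.2 n.factorial_ne_zero) two_ne_zero

lemma besselI0_nonneg (x : ℝ) : 0 ≤ besselI0 x :=
  tsum_nonneg fun n => by positivity

@[fun_prop]
lemma measurable_besselI0 : Measurable besselI0 :=
  measurable_of_tendsto_metrizable
    (fun N => by fun_prop : ∀ N, Measurable fun x : ℝ =>
      ∑ n ∈ Finset.range N, (x ^ 2 / 4) ^ n / (n.factorial : ℝ) ^ 2)
    (tendsto_pi_nhds.2 fun x => (summable_besselI0_series x).hasSum.tendsto_sum_nat)

lemma integrableOn_pow_mul_exp_neg_mul_sq {b : ℝ} (hb : 0 < b) (n : ℕ) :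
    IntegrableOn (fun x : ℝ => x ^ n * exp (-b * x ^ 2)) (Ioi 0) := by
  simpa only [rpow_natCast] using
    integrableOn_rpow_mul_exp_neg_mul_sq hb (s := n) (by linarith [n.cast_nonneg (α := ℝ)])

lemma integral_pow_mul_exp_neg_mul_sq {b : ℝ} (hb : 0 < b) (n : ℕ) :
    ∫ x in Ioi (0 : ℝ), x ^ (2 * n + 1) * exp (-b * x ^ 2) = n.factorial / (2 * b ^ (n + 1)) := by
  have h := integral_rpow_mul_exp_neg_mul_rpow two_pos
    (by linarith [n.cast_nonneg (α := ℝ)] : (-1 : ℝ) < (2 * n + 1 : ℕ)) hb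
  simp only [rpow_natCast, rpow_two] at h
  rw [h, show (((2 * n + 1 : ℕ) : ℝ) + 1) / 2 = n + 1 by push_cast; ring,
    show -(((2 * n + 1 : ℕ) : ℝ) + 1) / 2 = -((n + 1 : ℕ) : ℝ) by push_cast; ring,
    Gamma_nat_eq_factorial, rpow_neg hb.le, rpow_natCast]
  field_simp

lemma lintegral_mul_exp_neg_mul_sq_mul_besselI0 (a : ℝ) {b : ℝ} (hb : 0 < b) :
    ∫⁻ x in Ioi (0 : ℝ), ENNReal.ofReal (x * exp (-b * x ^ 2) * besselI0 (a * x)) =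
      ENNReal.ofReal (exp (a ^ 2 / (4 * b)) / (2 * b)) := by
  set c : ℕ → ℝ := fun n => (a ^ 2 / 4) ^ n / (n.factorial : ℝ) ^ 2 with hc
  have hc0 (n : ℕ) : 0 ≤ c n := by positivity
  have hterm (x : ℝ) (n : ℕ) :
      x * exp (-b * x ^ 2) * (((a * x) ^ 2 / 4) ^ n / (n.factorial : ℝ) ^ 2) =
        c n * (x ^ (2 * n + 1) * exp (-b * x ^ 2)) := by
    simp only [hc]
    ring
  have hseries (x : ℝ) : HasSum (fun n => c n * (x ^ (2 * n + 1) * exp (-b * x ^ 2)))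
      (x * exp (-b * x ^ 2) * besselI0 (a * x)) := by
    rw [besselI0]
    convert! (summable_besselI0_series (a * x)).hasSum.mul_left (x * exp (-b * x ^ 2)) using 1
    exact funext fun n => (hterm x n).symm
  have hmoments : HasSum (fun n => c n * (n.factorial / (2 * b ^ (n + 1))))
      (exp (a ^ 2 / (4 * b)) / (2 * b)) := by
    rw [exp_eq_exp_ℝ]
    convert! (NormedSpace.expSeries_div_hasSum_exp (a ^ 2 / (4 * b))).div_const (2 * b) using 1
    funext n
    simp only [hc, div_pow, pow_succ]
    field_simp
    ring
  calc ∫⁻ x in Ioi (0 : ℝ), ENNReal.ofReal (x * exp (-b * x ^ 2) * besselI0 (a * x))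
      = ∫⁻ x in Ioi (0 : ℝ), ∑' n, ENNReal.ofReal (c n * (x ^ (2 * n + 1) * exp (-b * x ^ 2))) := by
        refine setLIntegral_congr_fun measurableSet_Ioi fun x hx => ?_
        rw [← (hseries x).tsum_eq, ENNReal.ofReal_tsum_of_nonneg
          (fun n => mul_nonneg (hc0 n) (by have := hx.out.le; positivity)) (hseries x).summable]
    _ = ∑' n, ∫⁻ x in Ioi (0 : ℝ), ENNReal.ofReal (c n * (x ^ (2 * n + 1) * exp (-b * x ^ 2))) :=
        lintegral_tsum fun n => by fun_prop
    _ = ∑' n, ENNReal.ofReal (c n * (n.factorial / (2 * b ^ (n + 1)))) := by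
        congr 1 with n
        rw [← ofReal_integral_eq_lintegral_ofReal
          ((integrableOn_pow_mul_exp_neg_mul_sq hb _).const_mul _)
          ((ae_restrict_iff' measurableSet_Ioi).2 (.of_forall fun x hx => by
            have := hx.out.le; positivity)),
          integral_const_mul, integral_pow_mul_exp_neg_mul_sq hb]
    _ = ENNReal.ofReal (exp (a ^ 2 / (4 * b)) / (2 * b)) := by
        rw [← ENNReal.ofReal_tsum_of_nonneg (fun n => by positivity) hmoments.summable,
          hmoments.tsum_eq]

lemma integrable_and_integral_eq_of_lintegral_ofReal_eq {α : Type*} [MeasurableSpace α]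
    {μ : Measure α} {f : α → ℝ} {v : ℝ} (hf : AEStronglyMeasurable f μ) (hf0 : 0 ≤ᵐ[μ] f)
    (hv : 0 ≤ v) (h : ∫⁻ x, ENNReal.ofReal (f x) ∂μ = ENNReal.ofReal v) :
    Integrable f μ ∧ ∫ x, f x ∂μ = v :=
  ⟨⟨hf, (hasFiniteIntegral_iff_ofReal hf0).2 (h ▸ ENNReal.ofReal_lt_top)⟩, by
    rw [integral_eq_lintegral_of_nonneg_ae hf0 hf, h, ENNReal.toReal_ofReal hv]⟩

noncomputable def marcumDensity (a x : ℝ) : ℝ :=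
  x * exp (-(x ^ 2 + a ^ 2) / 2) * besselI0 (a * x)

lemma marcumQ_eq_integral_marcumDensity (a b : ℝ) :
    marcumQ a b = ∫ x in Ioi b, marcumDensity a x :=
  rfl

@[fun_prop]
lemma measurable_marcumDensity (a : ℝ) : Measurable (marcumDensity a) := by
  unfold marcumDensity
  fun_prop

lemma marcumDensity_nonneg (a : ℝ) {x : ℝ} (hx : 0 ≤ x) : 0 ≤ marcumDensity a x :=
  mul_nonneg (by positivity) (besselI0_nonneg _)

lemma marcumDensity_mul_exp (a t x : ℝ) :
    marcumDensity a x * exp (-t * x ^ 2) =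
      exp (-a ^ 2 / 2) * (x * exp (-((1 + 2 * t) / 2) * x ^ 2) * besselI0 (a * x)) := by
  have hexp : exp (-(x ^ 2 + a ^ 2) / 2) * exp (-t * x ^ 2) =
      exp (-a ^ 2 / 2) * exp (-((1 + 2 * t) / 2) * x ^ 2) := by
    rw [← exp_add, ← exp_add]
    ring_nf
  rw [marcumDensity]
  linear_combination (x * besselI0 (a * x)) * hexp

section

variable (a : ℝ) {t : ℝ} (ht : 0 < 1 + 2 * t)
include ht

lemma lintegral_marcumDensity_mul_exp :
    ∫⁻ x in Ioi (0 : ℝ), ENNReal.ofReal (marcumDensity a x * exp (-t * x ^ 2)) =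
      ENNReal.ofReal (exp (-(a ^ 2 * t) / (1 + 2 * t)) / (1 + 2 * t)) := by
  simp_rw [marcumDensity_mul_exp, ENNReal.ofReal_mul (exp_pos _).le]
  rw [lintegral_const_mul _ (by fun_prop),
    lintegral_mul_exp_neg_mul_sq_mul_besselI0 a (by positivity),
    ← ENNReal.ofReal_mul (exp_pos _).le, mul_div_assoc', ← exp_add]
  congr 1
  rw [show 2 * ((1 + 2 * t) / 2) = 1 + 2 * t by ring,
    show -a ^ 2 / 2 + a ^ 2 / (4 * ((1 + 2 * t) / 2)) = -(a ^ 2 * t) / (1 + 2 * t) by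
      field_simp
      ring]

lemma integrableOn_marcumDensity_mul_exp_and_integral_eq :
    IntegrableOn (fun x => marcumDensity a x * exp (-t * x ^ 2)) (Ioi 0) ∧
      ∫ x in Ioi (0 : ℝ), marcumDensity a x * exp (-t * x ^ 2) =
        exp (-(a ^ 2 * t) / (1 + 2 * t)) / (1 + 2 * t) :=
  integrable_and_integral_eq_of_lintegral_ofReal_eq
    (by fun_prop)
    (ae_restrict_of_forall_mem measurableSet_Ioi fun _ hx =>
      mul_nonneg (marcumDensity_nonneg a hx.out.le) (exp_pos _).le)
    (by positivity) (lintegral_marcumDensity_mul_exp a ht)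

end

lemma integrableOn_marcumDensity (a : ℝ) {b : ℝ} (hb : 0 ≤ b) :
    IntegrableOn (marcumDensity a) (Ioi b) := by
  simpa using
    (integrableOn_marcumDensity_mul_exp_and_integral_eq a (t := 0) (by norm_num)).1.mono_set
      (Ioi_subset_Ioi hb)

lemma marcumQ_zero (a : ℝ) : marcumQ a 0 = 1 := by
  simpa [marcumQ_eq_integral_marcumDensity] using
    (integrableOn_marcumDensity_mul_exp_and_integral_eq a (t := 0) (by norm_num)).2

lemma marcumQ_nonneg (a : ℝ) {b : ℝ} (hb : 0 ≤ b) : 0 ≤ marcumQ a b :=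
  setIntegral_nonneg measurableSet_Ioi fun _ hx => marcumDensity_nonneg a (hb.trans hx.out.le)

lemma marcumQ_le_of_le (a : ℝ) {b₁ b₂ : ℝ} (hb₁ : 0 ≤ b₁) (h : b₁ ≤ b₂) :
    marcumQ a b₂ ≤ marcumQ a b₁ :=
  setIntegral_mono_set (integrableOn_marcumDensity a hb₁)
    (ae_restrict_of_forall_mem measurableSet_Ioi fun _ hx =>
      marcumDensity_nonneg a (hb₁.trans hx.out.le))
    (Ioi_subset_Ioi h).eventuallyLE

lemma ofReal_marcumQ (a : ℝ) {b : ℝ} (hb : 0 ≤ b) :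
    ENNReal.ofReal (marcumQ a b) = ∫⁻ x in Ioi b, ENNReal.ofReal (marcumDensity a x) :=
  ofReal_integral_eq_lintegral_ofReal (integrableOn_marcumDensity a hb)
    (ae_restrict_of_forall_mem measurableSet_Ioi fun _ hx =>
      marcumDensity_nonneg a (hb.trans hx.out.le))

lemma lintegral_mul_setLIntegral_swap {α β : Type*} [MeasurableSpace α] [MeasurableSpace β]
    {μ : Measure α} {ν : Measure β} [SFinite μ] [SFinite ν] {S : Set (α × β)}
    (hS : MeasurableSet S) {w : α → ℝ≥0∞} {g : β → ℝ≥0∞} (hw : Measurable w) (hg : Measurable g) :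
    ∫⁻ x, w x * ∫⁻ y in Prod.mk x ⁻¹' S, g y ∂ν ∂μ =
      ∫⁻ y, (∫⁻ x in (·, y) ⁻¹' S, w x ∂μ) * g y ∂ν := by
  calc ∫⁻ x, w x * ∫⁻ y in Prod.mk x ⁻¹' S, g y ∂ν ∂μ
      = ∫⁻ x, ∫⁻ y, S.indicator (fun p => w p.1 * g p.2) (x, y) ∂ν ∂μ := by
        congr with x
        rw [← lintegral_const_mul _ hg, ← lintegral_indicator (measurable_prodMk_left hS)]
        rfl
    _ = ∫⁻ y, ∫⁻ x, S.indicator (fun p => w p.1 * g p.2) (x, y) ∂μ ∂ν :=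
        lintegral_lintegral_swap
          (((hw.comp measurable_fst).mul (hg.comp measurable_snd)).indicator hS).aemeasurable
    _ = ∫⁻ y, (∫⁻ x in (·, y) ⁻¹' S, w x ∂μ) * g y ∂ν := by
        congr with y
        rw [← lintegral_mul_const _ hw, ← lintegral_indicator (measurable_prodMk_right hS)]
        rfl

lemma integral_exp_neg_mul_Ioo {k : ℝ} (hk : k ≠ 0) {B : ℝ} (hB : 0 ≤ B) :
    ∫ x in Ioo 0 B, exp (-k * x) = (1 - exp (-k * B)) / k := by
  rw [← integral_Ioc_eq_integral_Ioo, ← intervalIntegral.integral_of_le hB,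
    intervalIntegral.integral_comp_mul_left (fun x => exp x) (neg_ne_zero.2 hk), integral_exp]
  simp only [mul_zero, exp_zero, smul_eq_mul]
  field_simp
  ring

lemma lintegral_exp_neg_mul_Ioo {k : ℝ} (hk : k ≠ 0) {B : ℝ} (hB : 0 ≤ B) :
    ∫⁻ x in Ioo 0 B, ENNReal.ofReal (exp (-k * x)) = ENNReal.ofReal ((1 - exp (-k * B)) / k) := by
  rw [← integral_exp_neg_mul_Ioo hk hB]
  exact (ofReal_integral_eq_lintegral_ofReal
    ((continuous_exp.comp (continuous_const_mul (-k))).integrableOn_Icc.mono_set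
      Ioo_subset_Icc_self)
    (.of_forall fun _ => (exp_pos _).le)).symm

lemma mul_sqrt_two_mul_lt_iff {f y : ℝ} (hf : 0 < f) (hy : 0 < y) (x : ℝ) :
    f * √(2 * x) < y ↔ x < y ^ 2 / (2 * f ^ 2) := by
  rw [← lt_div_iff₀' hf, sqrt_lt' (div_pos hy hf), div_pow, lt_div_iff₀ (by positivity),
    lt_div_iff₀ (by positivity)]
  constructor <;> intro h <;> linarith

lemma lintegral_exp_mul_marcumQ (a : ℝ) {k f : ℝ} (hk : 0 < k) (hf : 0 < f) :
    ∫⁻ x in Ioi (0 : ℝ), ENNReal.ofReal (exp (-k * x) * marcumQ a (f * √(2 * x))) =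
      ∫⁻ y in Ioi (0 : ℝ), ENNReal.ofReal
        ((marcumDensity a y - marcumDensity a y * exp (-(k / (2 * f ^ 2)) * y ^ 2)) / k) := by
  have hS : MeasurableSet {p : ℝ × ℝ | f * √(2 * p.1) < p.2} :=
    measurableSet_lt (by fun_prop) measurable_snd
  have hswap := lintegral_mul_setLIntegral_swap (μ := volume.restrict (Ioi 0))
    (ν := volume.restrict (Ioi 0)) hS (w := fun x => ENNReal.ofReal (exp (-k * x)))
    (g := fun y => ENNReal.ofReal (marcumDensity a y)) (by fun_prop) (by fun_prop)
  simp only [Measure.restrict_restrict' measurableSet_Ioi] at hswap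
  convert hswap using 1
  · refine lintegral_congr fun x => ?_
    have hb : 0 ≤ f * √(2 * x) := by positivity
    have hsec : Prod.mk x ⁻¹' {p : ℝ × ℝ | f * √(2 * p.1) < p.2} ∩ Ioi 0 = Ioi (f * √(2 * x)) :=
      Ioi_inter_Ioi.trans (congrArg Ioi (max_eq_left hb))
    rw [ENNReal.ofReal_mul (exp_pos _).le, ofReal_marcumQ a hb, hsec]
  · refine setLIntegral_congr_fun measurableSet_Ioi fun y hy => ?_
    have hsec : (·, y) ⁻¹' {p : ℝ × ℝ | f * √(2 * p.1) < p.2} ∩ Ioi 0 =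
        Ioo 0 (y ^ 2 / (2 * f ^ 2)) := by
      ext x
      simp only [mem_inter_iff, mem_preimage, mem_ofPred_eq, mem_Ioi, mem_Ioo,
        mul_sqrt_two_mul_lt_iff hf hy.out, and_comm]
    have hweight : 0 ≤ (1 - exp (-k * (y ^ 2 / (2 * f ^ 2)))) / k :=
      div_nonneg (sub_nonneg.2 (exp_le_one_iff.2 (by rw [neg_mul, neg_nonpos]; positivity))) hk.le
    rw [hsec, lintegral_exp_neg_mul_Ioo hk.ne' (by positivity), ← ENNReal.ofReal_mul hweight]
    congr 1
    ring_nf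

lemma antitone_marcumQ_mul_sqrt (a : ℝ) {f : ℝ} (hf : 0 ≤ f) :
    Antitone fun x => marcumQ a (f * √(2 * x)) :=
  fun _ _ h => marcumQ_le_of_le a (by positivity) (by gcongr)

lemma integrableOn_and_integral_exp_mul_marcumQ (a : ℝ) {k f : ℝ} (hk : 0 < k) (hf : 0 < f) :
    IntegrableOn (fun x => exp (-k * x) * marcumQ a (f * √(2 * x))) (Ioi 0) ∧
      ∫ x in Ioi (0 : ℝ), exp (-k * x) * marcumQ a (f * √(2 * x)) =
        1 / k * (1 - f ^ 2 / (k + f ^ 2) * exp (-(k * a ^ 2) / (2 * (k + f ^ 2)))) := by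
  set t := k / (2 * f ^ 2) with ht
  obtain ⟨hint₀, hval₀⟩ :=
    integrableOn_marcumDensity_mul_exp_and_integral_eq a (t := 0) (by norm_num)
  obtain ⟨hint, hval⟩ :=
    integrableOn_marcumDensity_mul_exp_and_integral_eq a (t := t) (by positivity)
  simp only [neg_zero, zero_mul, mul_zero, add_zero, div_one, exp_zero, mul_one]
    at hint₀ hval₀
  have hH : IntegrableOn (fun y => (marcumDensity a y - marcumDensity a y * exp (-t * y ^ 2)) / k)
      (Ioi 0) := (hint₀.sub hint).div_const k
  have hH0 : 0 ≤ᵐ[volume.restrict (Ioi 0)]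
      fun y => (marcumDensity a y - marcumDensity a y * exp (-t * y ^ 2)) / k := by
    refine ae_restrict_of_forall_mem measurableSet_Ioi fun y hy => div_nonneg ?_ hk.le
    have hexp : exp (-t * y ^ 2) ≤ 1 := exp_le_one_iff.2 (by rw [neg_mul, neg_nonpos]; positivity)
    nlinarith [marcumDensity_nonneg a hy.out.le]
  have hmeas : Measurable fun x => exp (-k * x) * marcumQ a (f * √(2 * x)) :=
    (by fun_prop : Measurable fun x => exp (-k * x)).mul
      (antitone_marcumQ_mul_sqrt a hf.le).measurable
  refine (integrable_and_integral_eq_of_lintegral_ofReal_eq hmeas.aestronglyMeasurable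
    (.of_forall fun x => mul_nonneg (exp_pos _).le (marcumQ_nonneg a (by positivity)))
    (integral_nonneg_of_ae hH0)
    (by rw [lintegral_exp_mul_marcumQ a hk hf, ofReal_integral_eq_lintegral_ofReal hH hH0])).imp
    id fun h => h.trans ?_
  have hden : 1 + 2 * t = (k + f ^ 2) / f ^ 2 := by
    rw [ht]
    field_simp
    ring
  rw [integral_div, integral_sub hint₀ hint, hval₀, hval, hden, ht]
  field_simp

theorem stmt_1_general (c e f : ℝ) (hc : 0 < c) (hf : 0 ≤ f) :
    IntegrableOn (fun x : ℝ => Real.exp (-(c ^ 2) * x) * marcumQ e (f * Real.sqrt (2 * x)))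
      (Set.Ioi 0) ∧
    ∫ x in Set.Ioi (0 : ℝ), Real.exp (-(c ^ 2) * x) * marcumQ e (f * Real.sqrt (2 * x)) =
      (1 / c ^ 2) *
        (1 - (f ^ 2 / (c ^ 2 + f ^ 2)) *
          Real.exp (-(c ^ 2 * e ^ 2) / (2 * (c ^ 2 + f ^ 2)))) := by
  have hc2 : 0 < c ^ 2 := by positivity
  rcases hf.eq_or_lt with rfl | hf
  · simp only [zero_mul, marcumQ_zero, mul_one]
    refine ⟨exp_neg_integrableOn_Ioi 0 hc2, ?_⟩
    rw [integral_exp_mul_Ioi (neg_neg_of_pos hc2)]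
    simp
  · exact integrableOn_and_integral_exp_mul_marcumQ e hc2 hf

theorem stmt_1 (c e f : ℝ) (hc : 0 < c) (he : 0 ≤ e) (hf : 0 ≤ f) :
    IntegrableOn (fun x : ℝ => Real.exp (-(c ^ 2) * x) * marcumQ e (f * Real.sqrt (2 * x)))
      (Set.Ioi 0) ∧
    ∫ x in Set.Ioi (0 : ℝ), Real.exp (-(c ^ 2) * x) * marcumQ e (f * Real.sqrt (2 * x)) =
      (1 / c ^ 2) *
        (1 - (f ^ 2 / (c ^ 2 + f ^ 2)) *
          Real.exp (-(c ^ 2 * e ^ 2) / (2 * (c ^ 2 + f ^ 2)))) :=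
  stmt_1_general c e f hc hf
end

section
/- For all reals β_m > 0, β_I > 0, γ_t > 0 and K ≥ 0, the outage probability with LoS main link and NLoS interference link is no larger than the outage probability with NLoS main link and LoS interference link when both Rician factors equal K; that is, (γ_t·β_I/(2·β_m + γ_t·β_I))·exp(-2·K·β_m/(2·β_m + γ_t·β_I)) ≤ 1 - (β_m/(2·γ_t·β_I + β_m))·exp(-2·γ_t·K·β_I/(2·γ_t·β_I + β_m)). -/
open MeasureTheory Real Set

theorem stmt_9 (βm βI γt K : ℝ) (hβm : 0 < βm) (hβI : 0 < βI) (hγt : 0 < γt)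
    (hK : 0 ≤ K) :
    (γt * βI / (2 * βm + γt * βI)) * Real.exp (-(2 * K * βm) / (2 * βm + γt * βI)) ≤
      1 - (βm / (2 * γt * βI + βm)) *
        Real.exp (-(2 * γt * K * βI) / (2 * γt * βI + βm)) := by
  have ha : 0 < γt * βI := mul_pos hγt hβI
  have h1 : Real.exp (-(2 * K * βm) / (2 * βm + γt * βI)) ≤ 1 := by
    apply Real.exp_le_one_iff.mpr
    apply div_nonpos_of_nonpos_of_nonneg
    · nlinarith
    · nlinarith
  have h2 : Real.exp (-(2 * γt * K * βI) / (2 * γt * βI + βm)) ≤ 1 := by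
    apply Real.exp_le_one_iff.mpr
    apply div_nonpos_of_nonpos_of_nonneg
    · nlinarith
    · nlinarith
  have hA : (γt * βI / (2 * βm + γt * βI)) * Real.exp (-(2 * K * βm) / (2 * βm + γt * βI))
      ≤ γt * βI / (2 * βm + γt * βI) :=
    mul_le_of_le_one_right (le_of_lt (div_pos ha (by linarith))) h1
  have hB : (βm / (2 * γt * βI + βm)) * Real.exp (-(2 * γt * K * βI) / (2 * γt * βI + βm))
      ≤ βm / (2 * γt * βI + βm) :=
    mul_le_of_le_one_right (le_of_lt (div_pos hβm (by linarith))) h2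
  have hkey : γt * βI / (2 * βm + γt * βI) ≤ 1 - βm / (2 * γt * βI + βm) := by
    have h3 : (0:ℝ) < 2 * βm + γt * βI := by linarith
    have h4 : (0:ℝ) < 2 * γt * βI + βm := by linarith
    rw [div_le_iff₀ h3]
    have h5 : βm / (2 * γt * βI + βm) * (2 * βm + γt * βI) ≤ 2 * βm := by
      rw [div_mul_eq_mul_div, div_le_iff₀ h4]; nlinarith
    nlinarith [h5]
  linarith
end

section
/- Fix reals γ_t > 0, K_m ≥ 0 and K_I ≥ 0, and define A(v) = √(2·K_m·v/(v + γ_t)), B(v) = √(2·γ_t·K_I/(v + γ_t)), and p_LL(v) = 1 - Q(A(v), B(v)) + (γ_t/(v + γ_t))·exp(-(A(v)² + B(v)²)/2)·I₀(A(v)·B(v)) for v ≥ 0. Then p_LL is strictly decreasing on [0, ∞). -/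
open MeasureTheory Real Set

/-- `A(v) = √(2·K_m·v/(v + γ_t))`. -/
noncomputable def Afun (Km γt v : ℝ) : ℝ := Real.sqrt (2 * Km * v / (v + γt))

/-- `B(v) = √(2·γ_t·K_I/(v + γ_t))`. -/
noncomputable def Bfun (KI γt v : ℝ) : ℝ := Real.sqrt (2 * γt * KI / (v + γt))

/-- Outage probability when both links are LoS, as a function of `v = β_m/β_I`. -/
noncomputable def pLL (γt Km KI v : ℝ) : ℝ :=
  1 - marcumQ (Afun Km γt v) (Bfun KI γt v) +
    (γt / (v + γt)) * Real.exp (-((Afun Km γt v) ^ 2 + (Bfun KI γt v) ^ 2) / 2) *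
      besselI0 (Afun Km γt v * Bfun KI γt v)

/-- Outage probability when both links are NLoS, as a function of `v = β_m/β_I`. -/
noncomputable def pNN (γt v : ℝ) : ℝ := γt / (v + γt)

open Filter Topology
open scoped Nat

/-!
Put `t = γt / (v + γt)`, which decreases from `1` to `0` as `v` runs over `[0, ∞)`; then
`A(v)² = 2 Km (1 - t)` and `B(v)² = 2 KI t`. The substitution `u = x² - B²` writes `Q(A, B)` as
`½ ∫₀^∞ H(t, u) du` with `H = exp (-(u + A² + B²) / 2) · g₀(A² (u + B²) / 4)`, where
`gₖ(x² / 4) = (2 / x)ᵏ Iₖ(x)`, so it suffices that `1 - ½ ∫₀^∞ H(t, u) du + t H(t, 0)` increases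
in `t`. The recurrence `w g₂(w) = g₀(w) - g₁(w)` gives `∂ₜH = ∂ᵤP` for an explicit `P` decaying
like `exp (-u / 8)` (by `g₀(y) ≤ exp (2 √y)`), so `∂ₜ ∫ H = -P(t, 0)` and the derivative in `t`
collapses to `exp (-(A² + B²) / 2) ((1 + (1 - t) KI + t Km) g₀ + 2 Km KI t (1 - t) g₁) > 0`.
-/

noncomputable section

def besselCoeff (k n : ℕ) : ℝ := ((n ! : ℝ) * (n + k)!)⁻¹

/-- `besselSeries k (x ^ 2 / 4) = (2 / x) ^ k * Iₖ(x)`. -/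
def besselSeries (k : ℕ) (y : ℝ) : ℝ := ∑' n, besselCoeff k n * y ^ n

lemma besselCoeff_pos (k n : ℕ) : 0 < besselCoeff k n := by
  unfold besselCoeff; positivity

lemma besselCoeff_le_besselCoeff_zero (k n : ℕ) : besselCoeff k n ≤ besselCoeff 0 n := by
  unfold besselCoeff
  gcongr
  omega

lemma besselCoeff_le_inv_factorial (k n : ℕ) : besselCoeff k n ≤ (n ! : ℝ)⁻¹ := by
  refine (besselCoeff_le_besselCoeff_zero k n).trans ?_
  unfold besselCoeff
  rw [add_zero, ← sq]
  gcongr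
  exact le_self_pow₀ (by exact_mod_cast n.factorial_pos) two_ne_zero

lemma succ_mul_besselCoeff_succ (k n : ℕ) :
    (n + 1) * besselCoeff k (n + 1) = besselCoeff (k + 1) n := by
  unfold besselCoeff
  rw [show n + 1 + k = n + (k + 1) by ring, Nat.factorial_succ]
  push_cast
  field_simp

lemma besselCoeff_succ_sub (k n : ℕ) :
    besselCoeff k (n + 1) - (k + 1) * besselCoeff (k + 1) (n + 1) = besselCoeff (k + 2) n := by
  unfold besselCoeff
  rw [show n + 1 + (k + 1) = n + (k + 1) + 1 by ring, show n + 1 + k = n + (k + 1) by ring,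
    show n + (k + 2) = n + (k + 1) + 1 by ring, Nat.factorial_succ n,
    Nat.factorial_succ (n + (k + 1))]
  push_cast
  field_simp
  ring

lemma summable_besselCoeff_mul_pow (k : ℕ) (y : ℝ) :
    Summable fun n => besselCoeff k n * y ^ n := by
  refine Summable.of_norm_bounded (Real.summable_pow_div_factorial |y|) fun n => ?_
  rw [norm_mul, norm_pow, Real.norm_of_nonneg (besselCoeff_pos k n).le, Real.norm_eq_abs,
    div_eq_inv_mul]
  gcongr
  exact besselCoeff_le_inv_factorial k n

lemma hasDerivAt_besselSeries (k : ℕ) (y : ℝ) :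
    HasDerivAt (besselSeries k) (besselSeries (k + 1) y) y := by
  set R := |y| + 1
  have hyR : y ∈ Metric.ball (0 : ℝ) R := by simp [R]
  have hbound : ∀ n (z : ℝ), z ∈ Metric.ball (0 : ℝ) R →
      ‖n * besselCoeff k n * z ^ (n - 1)‖ ≤ n * (n ! : ℝ)⁻¹ * R ^ (n - 1) := by
    intro n z hz
    rw [mem_ball_zero_iff] at hz
    rw [norm_mul, norm_mul, norm_pow, Real.norm_natCast,
      Real.norm_of_nonneg (besselCoeff_pos k n).le]
    gcongr
    exact besselCoeff_le_inv_factorial k n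
  have hsum : Summable fun n : ℕ => n * (n ! : ℝ)⁻¹ * R ^ (n - 1) := by
    rw [← summable_nat_add_iff 1]
    refine (Real.summable_pow_div_factorial R).congr fun n => ?_
    rw [Nat.factorial_succ, Nat.add_sub_cancel]
    push_cast
    field_simp
  have hderiv := hasDerivAt_tsum_of_isPreconnected hsum Metric.isOpen_ball
    (convex_ball (0 : ℝ) R).isPreconnected
    (fun n z _ => ((hasDerivAt_pow n z).const_mul (besselCoeff k n)).congr_deriv (by ring))
    hbound hyR (summable_besselCoeff_mul_pow k y) hyR
  refine hderiv.congr_deriv ?_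
  rw [(Summable.of_norm_bounded hsum fun n => hbound n y hyR).tsum_eq_zero_add]
  simp [besselSeries, ← succ_mul_besselCoeff_succ]

@[fun_prop]
lemma continuous_besselSeries (k : ℕ) : Continuous (besselSeries k) :=
  continuous_iff_continuousAt.2 fun y => (hasDerivAt_besselSeries k y).continuousAt

lemma mul_besselSeries_add_two (k : ℕ) (y : ℝ) :
    y * besselSeries (k + 2) y = besselSeries k y - (k + 1) * besselSeries (k + 1) y := by
  have hk := summable_besselCoeff_mul_pow k y
  have hk1 := (summable_besselCoeff_mul_pow (k + 1) y).mul_left ((k : ℝ) + 1)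
  unfold besselSeries
  rw [← tsum_mul_left, ← tsum_mul_left, ← hk.tsum_sub hk1, (hk.sub hk1).tsum_eq_zero_add]
  have h0 : besselCoeff k 0 - (k + 1) * besselCoeff (k + 1) 0 = 0 := by
    unfold besselCoeff
    rw [zero_add, zero_add, Nat.factorial_succ]
    push_cast
    field_simp
    ring
  rw [pow_zero, mul_one, mul_one, h0, zero_add]
  congr 1
  ext n
  rw [← besselCoeff_succ_sub]
  ring

lemma besselSeries_pos (k : ℕ) {y : ℝ} (hy : 0 ≤ y) : 0 < besselSeries k y :=
  (summable_besselCoeff_mul_pow k y).tsum_pos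
    (fun n => mul_nonneg (besselCoeff_pos k n).le (pow_nonneg hy n)) 0 (by simp [besselCoeff_pos])

lemma abs_besselSeries_le (k : ℕ) (y : ℝ) : |besselSeries k y| ≤ besselSeries 0 |y| := by
  refine (norm_tsum_le_tsum_norm (summable_besselCoeff_mul_pow k y).norm).trans ?_
  refine Summable.tsum_le_tsum (fun n => ?_) (summable_besselCoeff_mul_pow k y).norm
    (summable_besselCoeff_mul_pow 0 |y|)
  rw [norm_mul, norm_pow, Real.norm_of_nonneg (besselCoeff_pos k n).le, Real.norm_eq_abs]
  gcongr
  exact besselCoeff_le_besselCoeff_zero k n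

lemma monotoneOn_besselSeries (k : ℕ) : MonotoneOn (besselSeries k) (Ici 0) := by
  intro y (hy : 0 ≤ y) y' _ hyy'
  refine Summable.tsum_le_tsum (fun n => ?_) (summable_besselCoeff_mul_pow k y)
    (summable_besselCoeff_mul_pow k y')
  have := (besselCoeff_pos k n).le
  gcongr

lemma besselSeries_zero_le_exp {y : ℝ} (hy : 0 ≤ y) : besselSeries 0 y ≤ exp (2 * √y) := by
  have hexp := NormedSpace.expSeries_div_hasSum_exp (2 * √y)
  rw [← Real.exp_eq_exp_ℝ] at hexp
  rw [← hexp.tsum_eq]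
  -- `(2n)! = C(2n, n) (n!)² ≤ 4ⁿ (n!)²` bounds each term by an even term of the exponential series
  refine Summable.tsum_le_tsum_of_inj (fun n => 2 * n) (fun a b h => by simpa using h)
    (fun n _ => by positivity) (fun n => ?_) (summable_besselCoeff_mul_pow 0 y) hexp.summable
  have hfac : ((2 * n)! : ℝ) ≤ 4 ^ n * (n ! : ℝ) ^ 2 := by
    rw [← Nat.choose_mul_factorial_mul_factorial (show n ≤ 2 * n by omega),
      show 2 * n - n = n by omega]
    have := Nat.centralBinom_le_four_pow n
    rw [Nat.centralBinom] at this
    push_cast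
    rw [mul_assoc, ← sq]
    gcongr
    exact_mod_cast this
  have hpow : (2 * √y) ^ (2 * n) = 4 ^ n * y ^ n := by
    rw [pow_mul, mul_pow, Real.sq_sqrt hy, mul_pow]
    norm_num
  rw [hpow, besselCoeff, add_zero, ← sq, inv_mul_eq_div,
    div_le_div_iff₀ (by positivity) (by positivity)]
  calc y ^ n * ((2 * n)! : ℝ) ≤ y ^ n * (4 ^ n * (n ! : ℝ) ^ 2) := by gcongr
    _ = _ := by ring

lemma besselI0_eq_besselSeries (x : ℝ) : besselI0 x = besselSeries 0 (x ^ 2 / 4) := by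
  unfold besselI0 besselSeries besselCoeff
  congr 1
  ext n
  rw [add_zero, ← sq]
  ring

/-- The integrand of `marcumQ √a √b` after the substitution `u = x ^ 2 - b`. -/
def marcumKernel (a b u : ℝ) : ℝ := exp (-(u + a + b) / 2) * besselSeries 0 (a * (u + b) / 4)

lemma marcumQ_sqrt_eq_integral {a b : ℝ} (ha : 0 ≤ a) (hb : 0 ≤ b) :
    marcumQ √a √b = (1 / 2) * ∫ u in Ioi 0, marcumKernel a b u := by
  have himage : (fun x => x ^ 2 - b) '' Ioi √b = Ioi 0 := by
    ext u
    simp only [mem_image, mem_Ioi]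
    constructor
    · rintro ⟨x, hx, rfl⟩
      have := (Real.sqrt_lt' ((Real.sqrt_nonneg b).trans_lt hx)).1 hx
      linarith
    · intro hu
      refine ⟨√(u + b), Real.sqrt_lt_sqrt hb (by linarith), ?_⟩
      rw [Real.sq_sqrt (by linarith)]
      ring
  have hinj : InjOn (fun x => x ^ 2 - b) (Ioi √b) := fun x hx y hy hxy =>
    (pow_left_inj₀ ((Real.sqrt_nonneg b).trans hx.out.le)
      ((Real.sqrt_nonneg b).trans hy.out.le) two_ne_zero).1 (sub_left_injective hxy)
  rw [← himage, integral_image_eq_integral_abs_deriv_smul measurableSet_Ioi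
    (fun x _ => (((hasDerivAt_pow 2 x).sub_const b).congr_deriv (by ring : _ = 2 * x)
      ).hasDerivWithinAt) hinj, marcumQ, ← integral_const_mul]
  refine setIntegral_congr_fun measurableSet_Ioi fun x (hx : √b < x) => ?_
  have hx0 : 0 < x := (Real.sqrt_nonneg b).trans_lt hx
  rw [smul_eq_mul, abs_of_pos (by positivity), marcumKernel, besselI0_eq_besselSeries, mul_pow,
    Real.sq_sqrt ha]
  ring_nf

section Path

variable (Km KI : ℝ)

def pathWeight (t u : ℝ) : ℝ := exp (-(u + 2 * Km * (1 - t) + 2 * KI * t) / 2)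

def pathArg (t u : ℝ) : ℝ := 2 * Km * (1 - t) * (u + 2 * KI * t) / 4

/-- Along `t = γt / (v + γt)` one has `A(v)² = 2 Km (1 - t)` and `B(v)² = 2 KI t`. -/
def pathKernel (t u : ℝ) : ℝ := marcumKernel (2 * Km * (1 - t)) (2 * KI * t) u

def pathKernelDeriv (t u : ℝ) : ℝ :=
  pathWeight Km KI t u * ((Km - KI) * besselSeries 0 (pathArg Km KI t u) +
    (Km * KI * (1 - t) - Km * (u + 2 * KI * t) / 2) * besselSeries 1 (pathArg Km KI t u))

def pathFlux (t u : ℝ) : ℝ :=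
  pathWeight Km KI t u * (2 * KI * besselSeries 0 (pathArg Km KI t u) +
    Km * (u + 2 * KI * t) * besselSeries 1 (pathArg Km KI t u))

lemma pathKernel_eq (t u : ℝ) :
    pathKernel Km KI t u = pathWeight Km KI t u * besselSeries 0 (pathArg Km KI t u) := rfl

lemma hasDerivAt_pathKernel (t u : ℝ) :
    HasDerivAt (pathKernel Km KI · u) (pathKernelDeriv Km KI t u) t := by
  have hexponent : HasDerivAt (fun t => -(u + 2 * Km * (1 - t) + 2 * KI * t) / 2) (Km - KI) t := by
    have := ((((hasDerivAt_id' t).const_sub 1).const_mul (2 * Km)).const_add u).add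
      ((hasDerivAt_id' t).const_mul (2 * KI))
    exact (this.neg.div_const 2).congr_deriv (by ring)
  have harg : HasDerivAt (pathArg Km KI · u) (Km * KI * (1 - t) - Km * (u + 2 * KI * t) / 2) t := by
    have := (((hasDerivAt_id' t).const_sub 1).const_mul (2 * Km)).mul
      (((hasDerivAt_id' t).const_mul (2 * KI)).const_add u)
    exact (this.div_const 4).congr_deriv (by ring)
  have := hexponent.exp.mul ((hasDerivAt_besselSeries 0 _).comp t harg)
  refine this.congr_deriv ?_
  simp only [pathKernelDeriv, pathWeight, Function.comp_apply, zero_add]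
  ring

lemma hasDerivAt_pathFlux (t u : ℝ) :
    HasDerivAt (pathFlux Km KI t) (pathKernelDeriv Km KI t u) u := by
  have hexponent : HasDerivAt (fun u => -(u + 2 * Km * (1 - t) + 2 * KI * t) / 2) (-(1 / 2)) u :=
    ((((hasDerivAt_id' u).add_const _).add_const _).neg.div_const 2).congr_deriv (by ring)
  have harg : HasDerivAt (pathArg Km KI t) (Km * (1 - t) / 2) u :=
    ((((hasDerivAt_id' u).add_const _).const_mul _).div_const 4).congr_deriv (by ring)
  have := hexponent.exp.mul ((((hasDerivAt_besselSeries 0 _).comp u harg).const_mul (2 * KI)).add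
    ((((hasDerivAt_id' u).add_const (2 * KI * t)).const_mul Km).mul
      ((hasDerivAt_besselSeries 1 _).comp u harg)))
  refine this.congr_deriv ?_
  -- differentiating `besselSeries 1` produces `besselSeries 2`, which the recurrence eliminates
  have hrec := mul_besselSeries_add_two 0 (pathArg Km KI t u)
  simp only [pathKernelDeriv, pathWeight, Function.comp_apply, Pi.add_apply, Pi.mul_apply,
    Nat.cast_zero, zero_add, one_mul, mul_one] at hrec ⊢
  unfold pathArg at hrec ⊢
  linear_combination (exp (-(u + 2 * Km * (1 - t) + 2 * KI * t) / 2) * Km) * hrec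

end Path

section Bounds

variable {Km KI : ℝ}

lemma sqrt_half_mul_le (hKm : 0 ≤ Km) (hKI : 0 ≤ KI) {u : ℝ} (hu : 0 ≤ u) :
    √(Km * (u + 4 * KI) / 2) ≤ Km + √(2 * Km * KI) + u / 8 := by
  have hs := Real.sq_sqrt (by positivity : 0 ≤ 2 * Km * KI)
  rw [Real.sqrt_le_iff]
  refine ⟨by positivity, ?_⟩
  nlinarith [sq_nonneg (Km - u / 8), Real.sqrt_nonneg (2 * Km * KI),
    mul_nonneg hKm (Real.sqrt_nonneg (2 * Km * KI)), mul_nonneg hu (Real.sqrt_nonneg (2 * Km * KI))]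

lemma pathWeight_mul_besselSeries_le (hKm : 0 ≤ Km) (hKI : 0 ≤ KI) {t u : ℝ}
    (ht : t ∈ Icc (0 : ℝ) 2) (hu : 0 ≤ u) :
    pathWeight Km KI t u * besselSeries 0 |pathArg Km KI t u| ≤
      exp (3 * Km + 2 * √(2 * Km * KI)) * exp (-u / 4) := by
  obtain ⟨ht0, ht2⟩ := ht
  have harg : |pathArg Km KI t u| ≤ Km * (u + 4 * KI) / 2 := by
    have h1t : |1 - t| ≤ 1 := abs_le.2 ⟨by linarith, by linarith⟩
    rw [pathArg, abs_div, abs_mul, abs_mul, abs_of_nonneg (by positivity : 0 ≤ 2 * Km),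
      abs_of_nonneg (by positivity : 0 ≤ u + 2 * KI * t), abs_of_pos (by norm_num : (0 : ℝ) < 4)]
    have : u + 2 * KI * t ≤ u + 4 * KI := by nlinarith
    calc 2 * Km * |1 - t| * (u + 2 * KI * t) / 4 ≤ 2 * Km * 1 * (u + 4 * KI) / 4 := by gcongr
      _ = Km * (u + 4 * KI) / 2 := by ring
  have hbessel : besselSeries 0 |pathArg Km KI t u| ≤ exp (2 * Km + 2 * √(2 * Km * KI) + u / 4) :=
    calc besselSeries 0 |pathArg Km KI t u| ≤ besselSeries 0 (Km * (u + 4 * KI) / 2) :=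
          monotoneOn_besselSeries 0 (mem_Ici.2 (abs_nonneg _)) (mem_Ici.2 (by positivity)) harg
      _ ≤ exp (2 * √(Km * (u + 4 * KI) / 2)) := besselSeries_zero_le_exp (by positivity)
      _ ≤ _ := exp_le_exp.2 (by linarith [sqrt_half_mul_le hKm hKI hu])
  have hweight : pathWeight Km KI t u ≤ exp (Km - u / 2) :=
    exp_le_exp.2 (by nlinarith)
  calc pathWeight Km KI t u * besselSeries 0 |pathArg Km KI t u|
      ≤ exp (Km - u / 2) * exp (2 * Km + 2 * √(2 * Km * KI) + u / 4) :=
        mul_le_mul hweight hbessel (besselSeries_pos 0 (abs_nonneg _)).le (exp_pos _).le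
    _ = _ := by rw [← exp_add, ← exp_add]; ring_nf

lemma abs_pathWeight_mul_le (hKm : 0 ≤ Km) (hKI : 0 ≤ KI) {t u p q M : ℝ}
    (ht : t ∈ Icc (0 : ℝ) 2) (hu : 0 ≤ u) (hp : |p| ≤ M * (1 + u)) (hq : |q| ≤ M * (1 + u)) :
    |pathWeight Km KI t u * (p * besselSeries 0 (pathArg Km KI t u) +
        q * besselSeries 1 (pathArg Km KI t u))| ≤
      16 * M * exp (3 * Km + 2 * √(2 * Km * KI)) * exp (-(1 / 8) * u) := by
  have hM : 0 ≤ M * (1 + u) := (abs_nonneg p).trans hp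
  have hW : 0 ≤ pathWeight Km KI t u := (exp_pos _).le
  have hlin : 1 + u ≤ 8 * exp (u / 8) := by linarith [add_one_le_exp (u / 8)]
  have hcomb : |p * besselSeries 0 (pathArg Km KI t u) + q * besselSeries 1 (pathArg Km KI t u)|
      ≤ 2 * (M * (1 + u)) * besselSeries 0 |pathArg Km KI t u| := by
    refine (abs_add_le _ _).trans ?_
    rw [abs_mul, abs_mul]
    have h0 := abs_besselSeries_le 0 (pathArg Km KI t u)
    have h1 := abs_besselSeries_le 1 (pathArg Km KI t u)
    have := mul_le_mul hp h0 (abs_nonneg _) hM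
    have := mul_le_mul hq h1 (abs_nonneg _) hM
    linarith
  calc _ = pathWeight Km KI t u * |p * besselSeries 0 (pathArg Km KI t u) +
        q * besselSeries 1 (pathArg Km KI t u)| := by rw [abs_mul, abs_of_nonneg hW]
    _ ≤ 2 * (M * (1 + u)) * (pathWeight Km KI t u * besselSeries 0 |pathArg Km KI t u|) := by
        nlinarith
    _ ≤ 2 * (M * (1 + u)) * (exp (3 * Km + 2 * √(2 * Km * KI)) * exp (-u / 4)) :=
        mul_le_mul_of_nonneg_left (pathWeight_mul_besselSeries_le hKm hKI ht hu) (by linarith)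
    _ ≤ 2 * M * (8 * exp (u / 8)) * (exp (3 * Km + 2 * √(2 * Km * KI)) * exp (-u / 4)) := by
        have : 0 ≤ M := nonneg_of_mul_nonneg_left hM (by linarith)
        refine mul_le_mul_of_nonneg_right ?_ (by positivity)
        nlinarith [mul_le_mul_of_nonneg_left hlin this]
    _ = _ := by
        have : exp (u / 8) * exp (-u / 4) = exp (-(1 / 8) * u) := by rw [← exp_add]; ring_nf
        linear_combination (16 * M * exp (3 * Km + 2 * √(2 * Km * KI))) * this

def decayConst (Km KI : ℝ) : ℝ :=
  16 * (1 + 2 * Km + 2 * KI + 4 * Km * KI) * exp (3 * Km + 2 * √(2 * Km * KI))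

lemma abs_pathKernel_le (hKm : 0 ≤ Km) (hKI : 0 ≤ KI) {t u : ℝ} (ht : t ∈ Icc (0 : ℝ) 2)
    (hu : 0 ≤ u) : |pathKernel Km KI t u| ≤ decayConst Km KI * exp (-(1 / 8) * u) := by
  have := abs_pathWeight_mul_le hKm hKI ht hu (p := 1) (q := 0)
    (M := 1 + 2 * Km + 2 * KI + 4 * Km * KI) (by rw [abs_one]; nlinarith [mul_nonneg hKm hKI])
    (by rw [abs_zero]; positivity)
  simpa [pathKernel_eq, decayConst] using this

lemma abs_pathKernelDeriv_le (hKm : 0 ≤ Km) (hKI : 0 ≤ KI) {t u : ℝ} (ht : t ∈ Icc (0 : ℝ) 2)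
    (hu : 0 ≤ u) : |pathKernelDeriv Km KI t u| ≤ decayConst Km KI * exp (-(1 / 8) * u) := by
  obtain ⟨ht0, ht2⟩ := ht
  have hKmKI := mul_nonneg hKm hKI
  exact abs_pathWeight_mul_le hKm hKI ⟨ht0, ht2⟩ hu
    (abs_le.2 ⟨by nlinarith [mul_nonneg hKmKI hu], by nlinarith [mul_nonneg hKmKI hu]⟩)
    (abs_le.2 ⟨by nlinarith [mul_nonneg hKmKI hu, mul_nonneg hKmKI ht0, mul_nonneg hKm hu],
      by nlinarith [mul_nonneg hKmKI hu, mul_nonneg hKmKI ht0, mul_nonneg hKm hu]⟩)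

lemma abs_pathFlux_le (hKm : 0 ≤ Km) (hKI : 0 ≤ KI) {t u : ℝ} (ht : t ∈ Icc (0 : ℝ) 2)
    (hu : 0 ≤ u) : |pathFlux Km KI t u| ≤ decayConst Km KI * exp (-(1 / 8) * u) := by
  obtain ⟨ht0, ht2⟩ := ht
  have hKmKI := mul_nonneg hKm hKI
  exact abs_pathWeight_mul_le hKm hKI ⟨ht0, ht2⟩ hu
    (abs_le.2 ⟨by nlinarith [mul_nonneg hKmKI hu],
      by nlinarith [mul_nonneg hKmKI hu, mul_nonneg hKI hu]⟩)
    (abs_le.2 ⟨by nlinarith [mul_nonneg hKmKI hu, mul_nonneg hKmKI ht0, mul_nonneg hKm hu],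
      by nlinarith [mul_nonneg hKmKI hu, mul_nonneg hKmKI ht0, mul_nonneg hKm hu]⟩)

end Bounds

lemma integrableOn_Ioi_of_abs_le_exp {f : ℝ → ℝ} {C b : ℝ} (hf : Continuous f) (hb : 0 < b)
    (hbound : ∀ u, 0 ≤ u → |f u| ≤ C * exp (-b * u)) : IntegrableOn f (Ioi 0) := by
  refine Integrable.mono' ((exp_neg_integrableOn_Ioi 0 hb).const_mul C) hf.aestronglyMeasurable ?_
  filter_upwards [ae_restrict_mem measurableSet_Ioi] with u (hu : 0 < u)
  exact hbound u hu.le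

lemma tendsto_zero_of_abs_le_exp {f : ℝ → ℝ} {C b : ℝ} (hb : 0 < b)
    (hbound : ∀ u, 0 ≤ u → |f u| ≤ C * exp (-b * u)) : Tendsto f atTop (𝓝 0) := by
  have hdecay : Tendsto (fun u => C * exp (-b * u)) atTop (𝓝 0) := by
    simpa using (tendsto_exp_atBot.comp
      (tendsto_id.const_mul_atTop_of_neg (neg_neg_of_pos hb))).const_mul C
  exact squeeze_zero_norm' ((eventually_ge_atTop 0).mono hbound) hdecay

section Derivative

variable {Km KI : ℝ}

lemma integral_pathKernelDeriv (hKm : 0 ≤ Km) (hKI : 0 ≤ KI) {t : ℝ} (ht : t ∈ Icc (0 : ℝ) 2) :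
    ∫ u in Ioi 0, pathKernelDeriv Km KI t u = -pathFlux Km KI t 0 := by
  rw [integral_Ioi_of_hasDerivAt_of_tendsto' (fun u _ => hasDerivAt_pathFlux Km KI t u)
    (integrableOn_Ioi_of_abs_le_exp (by unfold pathKernelDeriv pathWeight pathArg; fun_prop)
      (by norm_num) fun u hu => abs_pathKernelDeriv_le hKm hKI ht hu)
    (tendsto_zero_of_abs_le_exp (by norm_num) fun u hu => abs_pathFlux_le hKm hKI ht hu),
    zero_sub]

lemma hasDerivAt_integral_pathKernel (hKm : 0 ≤ Km) (hKI : 0 ≤ KI) {t : ℝ}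
    (ht : t ∈ Ioo (0 : ℝ) 2) :
    HasDerivAt (fun t => ∫ u in Ioi 0, pathKernel Km KI t u) (-pathFlux Km KI t 0) t := by
  have hcont (s : ℝ) : Continuous (pathKernel Km KI s) := by
    unfold pathKernel marcumKernel; fun_prop
  have hderiv := hasDerivAt_integral_of_dominated_loc_of_deriv_le (μ := volume.restrict (Ioi 0))
    (bound := fun u => decayConst Km KI * exp (-(1 / 8) * u)) (Ioo_mem_nhds ht.1 ht.2)
    (Eventually.of_forall fun s => (hcont s).aestronglyMeasurable)
    (integrableOn_Ioi_of_abs_le_exp (hcont t) (by norm_num)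
      fun u hu => abs_pathKernel_le hKm hKI (Ioo_subset_Icc_self ht) hu)
    (by unfold pathKernelDeriv pathWeight pathArg; fun_prop : Continuous _).aestronglyMeasurable
    ?_ ((exp_neg_integrableOn_Ioi 0 (by norm_num)).const_mul _)
    (ae_of_all _ fun u s _ => hasDerivAt_pathKernel Km KI s u)
  · rw [← integral_pathKernelDeriv hKm hKI (Ioo_subset_Icc_self ht)]
    exact hderiv.2
  · filter_upwards [ae_restrict_mem measurableSet_Ioi] with u (hu : 0 < u) s hs
    exact abs_pathKernelDeriv_le hKm hKI (Ioo_subset_Icc_self hs) hu.le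

end Derivative

def outageInT (Km KI t : ℝ) : ℝ :=
  1 - (1 / 2) * (∫ u in Ioi 0, pathKernel Km KI t u) + t * pathKernel Km KI t 0

section Monotonicity

variable {Km KI : ℝ}

lemma hasDerivAt_outageInT (hKm : 0 ≤ Km) (hKI : 0 ≤ KI) {t : ℝ} (ht : t ∈ Ioo (0 : ℝ) 2) :
    HasDerivAt (outageInT Km KI) (pathWeight Km KI t 0 *
      ((1 + (1 - t) * KI + t * Km) * besselSeries 0 (pathArg Km KI t 0) +
        2 * Km * KI * t * (1 - t) * besselSeries 1 (pathArg Km KI t 0))) t := by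
  have := (((hasDerivAt_integral_pathKernel hKm hKI ht).const_mul (1 / 2)).const_sub 1).add
    ((hasDerivAt_id' t).mul (hasDerivAt_pathKernel Km KI t 0))
  refine this.congr_deriv ?_
  simp only [pathFlux, pathKernelDeriv, pathKernel_eq]
  ring

lemma strictMonoOn_outageInT (hKm : 0 ≤ Km) (hKI : 0 ≤ KI) :
    StrictMonoOn (outageInT Km KI) (Ioc 0 1) := by
  have hderiv {t : ℝ} (ht : t ∈ Ioc (0 : ℝ) 1) :=
    hasDerivAt_outageInT hKm hKI ⟨ht.1, ht.2.trans_lt one_lt_two⟩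
  refine strictMonoOn_of_deriv_pos (convex_Ioc 0 1)
    (fun t ht => (hderiv ht).continuousAt.continuousWithinAt) fun t ht => ?_
  rw [interior_Ioc] at ht
  obtain ⟨ht0, ht1⟩ := ht
  have h1t : 0 ≤ 1 - t := by linarith
  have harg : 0 ≤ pathArg Km KI t 0 :=
    div_nonneg (mul_nonneg (mul_nonneg (by positivity) h1t) (by positivity)) (by norm_num)
  have hcoeff : 0 < 1 + (1 - t) * KI + t * Km := by
    nlinarith [mul_nonneg h1t hKI, mul_nonneg ht0.le hKm]
  rw [(hderiv ⟨ht0, ht1.le⟩).deriv]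
  exact mul_pos (exp_pos _) (add_pos_of_pos_of_nonneg (mul_pos hcoeff (besselSeries_pos 0 harg))
    (mul_nonneg (mul_nonneg (by positivity) h1t) (besselSeries_pos 1 harg).le))

end Monotonicity

lemma pLL_eq_outageInT {γt Km KI v : ℝ} (hγt : 0 < γt) (hKm : 0 ≤ Km) (hKI : 0 ≤ KI)
    (hv : 0 ≤ v) : pLL γt Km KI v = outageInT Km KI (γt / (v + γt)) := by
  have hvγ : 0 < v + γt := by linarith
  have ht1 : 0 ≤ 1 - γt / (v + γt) := by rw [sub_nonneg, div_le_one hvγ]; linarith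
  have hA : Afun Km γt v = √(2 * Km * (1 - γt / (v + γt))) := by
    rw [Afun]; congr 1; field_simp; ring
  have hB : Bfun KI γt v = √(2 * KI * (γt / (v + γt))) := by
    rw [Bfun]; congr 1; field_simp
  rw [pLL, outageInT, hA, hB, marcumQ_sqrt_eq_integral (by positivity) (by positivity),
    besselI0_eq_besselSeries, mul_pow, Real.sq_sqrt (by positivity), Real.sq_sqrt (by positivity)]
  simp only [pathKernel, marcumKernel, zero_add, mul_assoc]

theorem stmt_10 (γt Km KI : ℝ) (hγt : 0 < γt) (hKm : 0 ≤ Km) (hKI : 0 ≤ KI) :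
    StrictAntiOn (pLL γt Km KI) (Set.Ici 0) := by
  have hmaps : MapsTo (fun v => γt / (v + γt)) (Ici 0) (Ioc 0 1) := fun v (hv : 0 ≤ v) =>
    ⟨by positivity, (div_le_one (by linarith)).2 (by linarith)⟩
  have hanti : StrictAntiOn (fun v => γt / (v + γt)) (Ici 0) := fun v (hv : 0 ≤ v) w _ hvw =>
    div_lt_div_of_pos_left hγt (by linarith) (by linarith)
  exact ((strictMonoOn_outageInT hKm hKI).comp_strictAntiOn hanti hmaps).congr fun v hv =>
    (pLL_eq_outageInT hγt hKm hKI hv).symm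

end
end
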